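/- Let O be an integral domain, A an O-algebra which is a domain, let I = ker(A⊗_O A → A) be the kernel of the multiplication map, and suppose that A⊗_O A has no nonzero nilpotents. If x ∈ A⊗_O A satisfies (a⊗1)x = (1⊗a)x for all a ∈ A, and x lies in the kernel I of the multiplication map, then x = 0. -/
import Mathlib


open TensorProduct

/-- if `A ⊗[O] A` is reduced, `x ∈ A ⊗[O] A` satisfies
`(a ⊗ 1) * x = (1 ⊗ a) * x` for all `a ∈ A`, and `x` lies in the kernel of the
multiplication map, then `x = 0`. -/
theorem stmt2 (O A : Type*) [CommRing O] [CommRing A] [IsDomain O] [IsDomain A]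
    [Algebra O A] [IsReduced (A ⊗[O] A)]
    (x : A ⊗[O] A)
    (hx : ∀ a : A, (a ⊗ₜ[O] (1 : A)) * x = ((1 : A) ⊗ₜ[O] a) * x)
    (hker : LinearMap.mul' O A x = 0) :
    x = 0 := by
  have key : ∀ y : A ⊗[O] A, y * x = ((1 : A) ⊗ₜ[O] (LinearMap.mul' O A y)) * x := by
    intro y
    induction y using TensorProduct.induction_on with
    | zero => simp
    | tmul a b =>
        have : (a ⊗ₜ[O] b) * x = (a ⊗ₜ[O] (1 : A)) * (((1 : A) ⊗ₜ[O] b) * x) := by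
          rw [← mul_assoc, Algebra.TensorProduct.tmul_mul_tmul, mul_one, one_mul]
        rw [this, mul_comm ((1 : A) ⊗ₜ[O] b) x, ← mul_assoc, hx a, mul_assoc,
          mul_comm x, ← mul_assoc, Algebra.TensorProduct.tmul_mul_tmul,
          one_mul, LinearMap.mul'_apply]
    | add y z hy hz =>
        rw [add_mul, hy, hz, map_add, tmul_add, add_mul]
  have hsq : x * x = 0 := by
    rw [key x, hker, TensorProduct.tmul_zero, zero_mul]
  have := IsReduced.eq_zero x ⟨2, by rwa [sq]⟩
  exact this
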